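/- Let a_1 < b_1 and a_2 < b_2 be real numbers, let f : [a_1,b_1] × [a_2,b_2] → ℝ be continuous, and let F : [a_1,b_1] × [a_2,b_2] → ℝ be continuous such that on the open rectangle (a_1,b_1) × (a_2,b_2) the mixed partial derivative ∂_x ∂_y F exists and satisfies ∂_x ∂_y F(x,y) = f(x,y). Then ∫_{[a_1,b_1] × [a_2,b_2]} f(x,y) dx dy = F(b_1,b_2) − F(a_1,b_2) + F(a_1,a_2) − F(b_1,a_2). -/

import Mathlib

/-!
Extend `f` continuously to the whole plane. For `x₁, x₂` strictly inside `[a₁, b₁]`, the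
fundamental theorem of calculus in `x` at interior heights `y` gives
`∫_{x₁}^{x₂} f(x, y) dx = ∂_y F(x₂, y) − ∂_y F(x₁, y)`. The right side is the `y`-derivative of
`F(x₂, ·) − F(x₁, ·)`, which is continuous up to `y = a₂, b₂`, so a second application in `y`
integrates it over all of `[a₂, b₂]`. After Fubini this says that `K(x) = F(x, b₂) − F(x, a₂)` is
a primitive of `x ↦ ∫_{a₂}^{b₂} f(x, y) dy` on the open interval `(a₁, b₁)`; as `K` is continuous
on `[a₁, b₁]`, it is then a primitive on the closed interval.
-/

open MeasureTheory

/-- The partial derivative of `F : ℝ × ℝ → ℝ` with respect to its second variable. -/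
noncomputable def pdy (F : ℝ × ℝ → ℝ) : ℝ × ℝ → ℝ :=
  fun p => deriv (fun v : ℝ => F (p.1, v)) p.2

/-- The partial derivative of `G : ℝ × ℝ → ℝ` with respect to its first variable. -/
noncomputable def pdx (G : ℝ × ℝ → ℝ) : ℝ × ℝ → ℝ :=
  fun p => deriv (fun u : ℝ => G (u, p.2)) p.1

open Set Filter Topology

universe u v

theorem ContinuousOn.exists_continuous_eqOn {X : Type u} {Y : Type v} [TopologicalSpace X]
    [NormalSpace X] [TopologicalSpace Y] [TietzeExtension.{u, v} Y] {s : Set X} (hs : IsClosed s)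
    {f : X → Y} (hf : ContinuousOn f s) : ∃ g : X → Y, Continuous g ∧ EqOn g f s := by
  obtain ⟨G, hG⟩ := ContinuousMap.exists_restrict_eq hs ⟨s.domRestrict f, hf.domRestrict⟩
  exact ⟨G, G.continuous, fun p hp => congr($hG ⟨p, hp⟩)⟩

theorem setIntegral_Icc_prod_Icc_eq_intervalIntegral {f : ℝ × ℝ → ℝ} {a b c d : ℝ}
    (hab : a ≤ b) (hcd : c ≤ d) (hf : IntegrableOn f (Icc a b ×ˢ Icc c d)) :
    ∫ p in Icc a b ×ˢ Icc c d, f p = ∫ x in a..b, ∫ y in c..d, f (x, y) := by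
  rw [Measure.volume_eq_prod] at hf ⊢
  simp_rw [setIntegral_prod f hf, intervalIntegral.integral_of_le hab,
    intervalIntegral.integral_of_le hcd, integral_Icc_eq_integral_Ioc]

theorem Continuous.intervalIntegral_intervalIntegral_swap {f : ℝ × ℝ → ℝ} (hf : Continuous f)
    (a b c d : ℝ) :
    ∫ x in a..b, ∫ y in c..d, f (x, y) = ∫ y in c..d, ∫ x in a..b, f (x, y) :=
  MeasureTheory.intervalIntegral_intervalIntegral_swap (F := fun x y => f (x, y)) <|
    hf.continuousOn.integrableOn_compact (isCompact_uIcc.prod isCompact_uIcc) |>.mono_set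
      (prod_mono uIoc_subset_uIcc uIoc_subset_uIcc)

theorem intervalIntegral.integral_eq_sub_of_integral_eq_sub_on_Ioo {K Ψ : ℝ → ℝ} {a b : ℝ}
    (hab : a < b) (hK : ContinuousOn K (Icc a b)) (hΨ : Continuous Ψ)
    (h : ∀ x₁ ∈ Ioo a b, ∀ x₂ ∈ Ioo a b, ∫ t in x₁..x₂, Ψ t = K x₂ - K x₁) :
    ∫ t in a..b, Ψ t = K b - K a := by
  obtain ⟨c, hc⟩ := nonempty_Ioo.2 hab
  refine integral_eq_sub_of_hasDerivAt_of_le hab.le hK (fun x hx => ?_)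
    (hΨ.intervalIntegrable a b)
  have hK_eq : (fun t => K c + ∫ s in c..t, Ψ s) =ᶠ[𝓝 x] K := by
    filter_upwards [isOpen_Ioo.mem_nhds hx] with t ht
    rw [h c hc t ht]
    ring
  exact ((hΨ.integral_hasStrictDerivAt c x).hasDerivAt.const_add (K c)).congr_of_eventuallyEq
    hK_eq.symm

section Rectangle

variable {a₁ b₁ a₂ b₂ : ℝ} {f F : ℝ × ℝ → ℝ}

theorem intervalIntegral_eq_pdy_sub_pdy (hf : Continuous f)
    (hdx : ∀ p ∈ Ioo a₁ b₁ ×ˢ Ioo a₂ b₂, DifferentiableAt ℝ (fun u : ℝ => pdy F (u, p.2)) p.1)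
    (hpde : ∀ p ∈ Ioo a₁ b₁ ×ˢ Ioo a₂ b₂, pdx (pdy F) p = f p)
    {x₁ x₂ y : ℝ} (hx₁ : x₁ ∈ Ioo a₁ b₁) (hx₂ : x₂ ∈ Ioo a₁ b₁) (hy : y ∈ Ioo a₂ b₂) :
    ∫ x in x₁..x₂, f (x, y) = pdy F (x₂, y) - pdy F (x₁, y) := by
  refine intervalIntegral.integral_eq_sub_of_hasDerivAt (f := fun x => pdy F (x, y))
    (fun x hx => ?_) ((by fun_prop : Continuous fun x => f (x, y)).intervalIntegrable x₁ x₂)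
  have hxy : (x, y) ∈ Ioo a₁ b₁ ×ˢ Ioo a₂ b₂ := ⟨ordConnected_Ioo.uIcc_subset hx₁ hx₂ hx, hy⟩
  exact hpde (x, y) hxy ▸ (hdx (x, y) hxy).hasDerivAt

theorem intervalIntegral_intervalIntegral_eq_vertex_sum (hf : Continuous f) (h₂ : a₂ ≤ b₂)
    (hF : ContinuousOn F (Icc a₁ b₁ ×ˢ Icc a₂ b₂))
    (hdy : ∀ p ∈ Ioo a₁ b₁ ×ˢ Ioo a₂ b₂, DifferentiableAt ℝ (fun v : ℝ => F (p.1, v)) p.2)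
    (hdx : ∀ p ∈ Ioo a₁ b₁ ×ˢ Ioo a₂ b₂, DifferentiableAt ℝ (fun u : ℝ => pdy F (u, p.2)) p.1)
    (hpde : ∀ p ∈ Ioo a₁ b₁ ×ˢ Ioo a₂ b₂, pdx (pdy F) p = f p)
    {x₁ x₂ : ℝ} (hx₁ : x₁ ∈ Ioo a₁ b₁) (hx₂ : x₂ ∈ Ioo a₁ b₁) :
    ∫ y in a₂..b₂, ∫ x in x₁..x₂, f (x, y) =
      (F (x₂, b₂) - F (x₂, a₂)) - (F (x₁, b₂) - F (x₁, a₂)) := by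
  have hF_vert : ∀ x ∈ Icc a₁ b₁, ContinuousOn (fun y => F (x, y)) (Icc a₂ b₂) := fun x hx =>
    hF.uncurry_left (f := fun x y => F (x, y)) x hx
  have hftc := intervalIntegral.integral_eq_sub_of_hasDerivAt_of_le h₂
    (f := fun y => F (x₂, y) - F (x₁, y))
    ((hF_vert x₂ (Ioo_subset_Icc_self hx₂)).sub (hF_vert x₁ (Ioo_subset_Icc_self hx₁)))
    (fun y hy => by
      rw [intervalIntegral_eq_pdy_sub_pdy hf hdx hpde hx₁ hx₂ hy]
      exact (hdy (x₂, y) ⟨hx₂, hy⟩).hasDerivAt.sub (hdy (x₁, y) ⟨hx₁, hy⟩).hasDerivAt)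
    ((by fun_prop : Continuous fun y => ∫ x in x₁..x₂, f (x, y)).intervalIntegrable a₂ b₂)
  rw [hftc]
  ring

end Rectangle

/-- (Fundamental Theorem of Calculus in 2D.)
Let `a₁ < b₁` and `a₂ < b₂`, let `f : [a₁,b₁] × [a₂,b₂] → ℝ` be continuous, and let
`F : [a₁,b₁] × [a₂,b₂] → ℝ` be continuous such that on the open rectangle the mixed
partial derivative `∂_x ∂_y F` exists (first differentiating in the second variable `y`,
then in the first variable `x`) and satisfies `∂_x ∂_y F = f`. Then
`∫_{[a₁,b₁] × [a₂,b₂]} f = F(b₁,b₂) − F(a₁,b₂) + F(a₁,a₂) − F(b₁,a₂)`. -/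
theorem integral_eq_alternating_vertex_sum_2D (a₁ b₁ a₂ b₂ : ℝ) (h₁ : a₁ < b₁) (h₂ : a₂ < b₂)
    (f F : ℝ × ℝ → ℝ)
    (hf : ContinuousOn f (Set.Icc a₁ b₁ ×ˢ Set.Icc a₂ b₂))
    (hF : ContinuousOn F (Set.Icc a₁ b₁ ×ˢ Set.Icc a₂ b₂))
    (hdy : ∀ p ∈ Set.Ioo a₁ b₁ ×ˢ Set.Ioo a₂ b₂,
      DifferentiableAt ℝ (fun v : ℝ => F (p.1, v)) p.2)
    (hdx : ∀ p ∈ Set.Ioo a₁ b₁ ×ˢ Set.Ioo a₂ b₂,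
      DifferentiableAt ℝ (fun u : ℝ => pdy F (u, p.2)) p.1)
    (hpde : ∀ p ∈ Set.Ioo a₁ b₁ ×ˢ Set.Ioo a₂ b₂, pdx (pdy F) p = f p) :
    ∫ p in Set.Icc a₁ b₁ ×ˢ Set.Icc a₂ b₂, f p =
      F (b₁, b₂) - F (a₁, b₂) + F (a₁, a₂) - F (b₁, a₂) := by
  have hclosed : IsClosed (Icc a₁ b₁ ×ˢ Icc a₂ b₂) := isClosed_Icc.prod isClosed_Icc
  obtain ⟨g, hg, hgf⟩ := hf.exists_continuous_eqOn hclosed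
  have hpde' : ∀ p ∈ Ioo a₁ b₁ ×ˢ Ioo a₂ b₂, pdx (pdy F) p = g p := fun p hp =>
    (hpde p hp).trans (hgf (prod_mono Ioo_subset_Icc_self Ioo_subset_Icc_self hp)).symm
  have hK : ContinuousOn (fun x => F (x, b₂) - F (x, a₂)) (Icc a₁ b₁) :=
    (hF.uncurry_right (f := fun x y => F (x, y)) b₂ (right_mem_Icc.2 h₂.le)).sub
      (hF.uncurry_right (f := fun x y => F (x, y)) a₂ (left_mem_Icc.2 h₂.le))
  have hprimitive := intervalIntegral.integral_eq_sub_of_integral_eq_sub_on_Ioo h₁ hK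
    (by fun_prop : Continuous fun x => ∫ y in a₂..b₂, g (x, y)) fun x₁ hx₁ x₂ hx₂ => by
      rw [hg.intervalIntegral_intervalIntegral_swap,
        intervalIntegral_intervalIntegral_eq_vertex_sum hg h₂.le hF hdy hdx hpde' hx₁ hx₂]
  rw [setIntegral_congr_fun hclosed.measurableSet hgf.symm,
    setIntegral_Icc_prod_Icc_eq_intervalIntegral h₁.le h₂.le
      (hg.continuousOn.integrableOn_compact (isCompact_Icc.prod isCompact_Icc)), hprimitive]
  ring
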